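/- arXiv:2003.07106 — 4 statements merged into one kernel-verified Lean document; each statement's English description precedes it below -/
import Mathlib

section
/- Every capacitated graph (G, κ) has at least one DP-Nash subgraph. -/
/-!
The vertices are placed greedily. A pivot `w` goes to the D-set together with `min (d w) (κ w)` of
its still available neighbours, which go to the P-set and are covered by the star at `w`; then we
recurse on the undecided vertices, keeping those already in the P-set available as leaves. The
pivot is chosen so that no undecided vertex loses target degree when `w` becomes unavailable:
either some `w` has at most `κ w` undecided neighbours and its star takes all of them, or every
undecided vertex has more than `κ` undecided neighbours, and one fewer does not change the minimum.
-/

open Finset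
open scoped Classical

noncomputable section

variable {V : Type*} [Fintype V]

/-- Degree of a vertex in a (simple) graph on a finite vertex set. -/
def deg (H : SimpleGraph V) (x : V) : ℕ :=
  (Finset.univ.filter fun y => H.Adj x y).card

/-- `(D, P; H)` is a DP-Nash subgraph of the capacitated graph `(G, κ)`:
`H` is a spanning subgraph of `G`, bipartite with partite sets `D` and `P`,
no vertex of `P` is isolated in `H`, and every `x ∈ D` has
`H`-degree `min (d_G x) (κ x)`. -/
def IsDPNash (G : SimpleGraph V) (κ : V → ℕ) (D P : Finset V) (H : SimpleGraph V) : Prop :=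
  H ≤ G ∧ D ∪ P = Finset.univ ∧ Disjoint D P ∧
    (∀ ⦃u v⦄, H.Adj u v → (u ∈ D ∧ v ∈ P) ∨ (u ∈ P ∧ v ∈ D)) ∧
    (∀ v ∈ P, 0 < deg H v) ∧
    (∀ x ∈ D, deg H x = min (deg G x) (κ x))

/-- `X = {x : κ(x) = d_G(x)}`. -/
def XX (G : SimpleGraph V) (κ : V → ℕ) : Finset V :=
  Finset.univ.filter fun x => κ x = deg G x

/-- `Y = N(X) \ X`. -/
def YY (G : SimpleGraph V) (κ : V → ℕ) : Finset V :=
  Finset.univ.filter fun y => y ∉ XX G κ ∧ ∃ x ∈ XX G κ, G.Adj x y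

/-- `Z = V \ (X ∪ Y)`. -/
def ZZ (G : SimpleGraph V) (κ : V → ℕ) : Finset V :=
  Finset.univ \ (XX G κ ∪ YY G κ)

/-- `Y^{κ>0} = {y ∈ Y : κ(y) > 0}`. -/
def Ypos (G : SimpleGraph V) (κ : V → ℕ) : Finset V :=
  (YY G κ).filter fun y => 0 < κ y

/-- The neighbours of `x` in `G` lying in `W`. -/
def nbrW (G : SimpleGraph V) (x : V) (W : Finset V) : Finset V :=
  Finset.univ.filter fun y => G.Adj x y ∧ y ∈ W

/-- `L(W) = {x ∈ X ∪ Z : |N_G(x) ∩ W| > d_G(x) - κ(x)}`. -/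
def LL (G : SimpleGraph V) (κ : V → ℕ) (W : Finset V) : Finset V :=
  (XX G κ ∪ ZZ G κ).filter fun x => deg G x - κ x < (nbrW G x W).card

section Star

variable {α : Type*}

def star (w : α) (S : Finset α) : SimpleGraph α :=
  SimpleGraph.fromRel fun u v => u = w ∧ v ∈ S

lemma star_adj_iff {w u v : α} {S : Finset α} :
    (star w S).Adj u v ↔ u ≠ v ∧ (u = w ∧ v ∈ S ∨ v = w ∧ u ∈ S) :=
  SimpleGraph.fromRel_adj _ _ _

lemma star_le {G : SimpleGraph α} {w : α} {S : Finset α} (h : ∀ v ∈ S, G.Adj w v) :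
    star w S ≤ G := by
  intro u v huv
  rcases (star_adj_iff.mp huv).2 with ⟨rfl, hv⟩ | ⟨rfl, hu⟩
  exacts [h v hv, (h u hu).symm]

lemma star_not_adj {w x y : α} {S : Finset α} (hxw : x ≠ w) (hxS : x ∉ S) :
    ¬ (star w S).Adj x y := fun hxy => by
  rcases (star_adj_iff.mp hxy).2 with ⟨rfl, -⟩ | ⟨-, hx⟩
  exacts [hxw rfl, hxS hx]

end Star

lemma sdiff_insert_union_union_eq_erase {α : Type*} [DecidableEq α] {A P₀ S : Finset α} {w : α}
    (hSU : S ⊆ A ∪ P₀) (hwS : w ∉ S) (hwP₀ : w ∉ P₀) :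
    A \ insert w S ∪ (P₀ ∪ S) = (A ∪ P₀).erase w := by
  ext u
  have := @hSU u
  simp only [mem_union, mem_sdiff, mem_insert, mem_erase] at this ⊢
  grind

lemma deg_mono {H K : SimpleGraph V} (h : H ≤ K) (x : V) : deg H x ≤ deg K x :=
  card_le_card fun _ hy => by simp only [mem_filter] at hy ⊢; exact ⟨hy.1, h hy.2⟩

lemma deg_pos_of_adj {H : SimpleGraph V} {x y : V} (h : H.Adj x y) : 0 < deg H x :=
  card_pos.mpr ⟨y, by simp [h]⟩

lemma deg_sup_of_forall_not_adj {H K : SimpleGraph V} {x : V} (hK : ∀ y, ¬ K.Adj x y) :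
    deg (H ⊔ K) x = deg H x := by
  unfold deg
  congr 1
  ext y
  simp [hK y]

lemma deg_star_center {w : V} {S : Finset V} (hw : w ∉ S) : deg (star w S) w = S.card := by
  unfold deg
  congr 1
  ext y
  simp only [mem_filter, mem_univ, true_and, star_adj_iff]
  constructor
  · rintro ⟨-, hy | ⟨-, hwS⟩⟩
    exacts [hy, absurd hwS hw]
  · exact fun hy => ⟨fun h => hw (h ▸ hy), Or.inl hy⟩

@[simp]
lemma mem_nbrW {G : SimpleGraph V} {x y : V} {W : Finset V} :
    y ∈ nbrW G x W ↔ G.Adj x y ∧ y ∈ W := by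
  simp [nbrW]

lemma nbrW_mono {G : SimpleGraph V} {x : V} {W₁ W₂ : Finset V} (h : W₁ ⊆ W₂) :
    nbrW G x W₁ ⊆ nbrW G x W₂ := fun _ hy => by simp only [mem_nbrW] at hy ⊢; exact ⟨hy.1, h hy.2⟩

lemma nbrW_erase {G : SimpleGraph V} {x w : V} {W : Finset V} :
    nbrW G x (W.erase w) = (nbrW G x W).erase w := by
  ext y
  simp only [mem_nbrW, mem_erase]
  tauto

lemma nbrW_univ {G : SimpleGraph V} {x : V} : nbrW G x univ = univ.filter (G.Adj x) := by
  ext y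
  simp

lemma min_card_nbrW_erase {G : SimpleGraph V} {κ : V → ℕ} {x w : V} {W : Finset V}
    (h : G.Adj x w → κ x < (nbrW G x W).card) :
    min (nbrW G x (W.erase w)).card (κ x) = min (nbrW G x W).card (κ x) := by
  rw [nbrW_erase]
  by_cases hw : w ∈ nbrW G x W
  · have := h (mem_nbrW.mp hw).1
    rw [card_erase_of_mem hw]
    omega
  · rw [erase_eq_of_notMem hw]

lemma exists_pivot (G : SimpleGraph V) (κ : V → ℕ) {A U : Finset V} (hAU : A ⊆ U)
    (hA : A.Nonempty) :
    ∃ w ∈ A, ∃ S ⊆ nbrW G w U, S.card = min (nbrW G w U).card (κ w) ∧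
      ∀ u ∈ A, u ∉ S → G.Adj u w → κ u < (nbrW G u U).card := by
  by_cases hsmall : ∃ w ∈ A, (nbrW G w A).card ≤ κ w
  · obtain ⟨w, hwA, hw⟩ := hsmall
    have hAU' : nbrW G w A ⊆ nbrW G w U := nbrW_mono hAU
    obtain ⟨S, hAS, hSU, hS⟩ := exists_subsuperset_card_eq hAU'
      (le_min (card_le_card hAU') hw) (min_le_left _ (κ w))
    refine ⟨w, hwA, S, hSU, hS, fun u huA huS huw => absurd (hAS ?_) huS⟩
    exact mem_nbrW.mpr ⟨huw.symm, huA⟩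
  · push Not at hsmall
    obtain ⟨w, hwA⟩ := hA
    obtain ⟨S, hSU, hS⟩ := exists_subset_card_eq (min_le_left (nbrW G w U).card (κ w))
    exact ⟨w, hwA, S, hSU, hS, fun u huA _ _ =>
      (hsmall u huA).trans_le (card_le_card (nbrW_mono hAU))⟩

/-- `A` is split into the D-set `D` and the P-set `P`; the vertices of `P₀` already belong to the
P-set and are covered, but may still serve as leaves of the stars centred in `D`. -/
structure IsPartialDPNash (G : SimpleGraph V) (κ : V → ℕ) (A P₀ D P : Finset V)
    (H : SimpleGraph V) : Prop where
  union_eq : D ∪ P = A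
  disjoint : Disjoint D P
  le : H ≤ G
  adj_mem : ∀ ⦃u v⦄, H.Adj u v → (u ∈ D ∧ v ∈ P ∪ P₀) ∨ (u ∈ P ∪ P₀ ∧ v ∈ D)
  deg_pos : ∀ v ∈ P, 0 < deg H v
  deg_eq : ∀ x ∈ D, deg H x = min (nbrW G x (A ∪ P₀)).card (κ x)

namespace IsPartialDPNash

variable {G : SimpleGraph V} {κ : V → ℕ} {A P₀ D P : Finset V} {H : SimpleGraph V}

lemma empty (P₀ : Finset V) : IsPartialDPNash G κ ∅ P₀ ∅ ∅ ⊥ where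
  union_eq := union_empty _
  disjoint := disjoint_empty_left _
  le := bot_le
  adj_mem := fun _ _ h => h.elim
  deg_pos := by simp
  deg_eq := by simp

lemma isDPNash (h : IsPartialDPNash G κ univ ∅ D P H) : IsDPNash G κ D P H :=
  ⟨h.le, h.union_eq, h.disjoint, fun _ _ huv => by simpa using h.adj_mem huv, h.deg_pos,
    fun x hx => by rw [h.deg_eq x hx, union_empty, nbrW_univ]; rfl⟩

lemma not_adj (h : IsPartialDPNash G κ A P₀ D P H) {w : V} (hwD : w ∉ D) (hwP : w ∉ P ∪ P₀)
    (y : V) : ¬ H.Adj w y := fun hwy => by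
  rcases h.adj_mem hwy with ⟨hw, -⟩ | ⟨hw, -⟩
  exacts [hwD hw, hwP hw]

lemma extend_star {S : Finset V} {w : V} (hwA : w ∈ A) (hwP₀ : w ∉ P₀)
    (hSw : S ⊆ nbrW G w (A ∪ P₀)) (hS : S.card = min (nbrW G w (A ∪ P₀)).card (κ w))
    (hpivot : ∀ u ∈ A, u ∉ S → G.Adj u w → κ u < (nbrW G u (A ∪ P₀)).card)
    (h : IsPartialDPNash G κ (A \ insert w S) (P₀ ∪ S) D P H) :
    IsPartialDPNash G κ A P₀ (insert w D) (P ∪ S ∩ A) (H ⊔ star w S) := by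
  have hSadj : ∀ v ∈ S, G.Adj w v := fun v hv => (mem_nbrW.mp (hSw hv)).1
  have hSU : S ⊆ A ∪ P₀ := fun v hv => (mem_nbrW.mp (hSw hv)).2
  have hwS : w ∉ S := fun hw => G.irrefl (hSadj w hw)
  have hD : ∀ x ∈ D, x ∈ A ∧ x ≠ w ∧ x ∉ S := fun x hx => by
    simpa [not_or] using (h.union_eq ▸ mem_union_left P hx : x ∈ A \ insert w S)
  have hwD : w ∉ D := fun hw => (hD w hw).2.1 rfl
  have hwP : w ∉ P := fun hw => by
    simpa using (h.union_eq ▸ mem_union_right D hw : w ∈ A \ insert w S)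
  have hPS : P ∪ (P₀ ∪ S) ⊆ P ∪ S ∩ A ∪ P₀ := fun v hv => by
    have := @hSU v
    simp only [mem_union, mem_inter] at this hv ⊢
    tauto
  refine ⟨?_, ?_, sup_le h.le (star_le hSadj), ?_, ?_, ?_⟩
  · rw [insert_union, ← union_assoc, h.union_eq]
    ext u
    simp only [mem_insert, mem_union, mem_sdiff, mem_inter]
    grind
  · refine disjoint_insert_left.mpr ⟨?_, disjoint_union_right.mpr ⟨h.disjoint, ?_⟩⟩
    · simp only [mem_union, mem_inter, not_or]
      exact ⟨hwP, fun hw => hwS hw.1⟩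
    · exact disjoint_left.mpr fun x hx hxS => (hD x hx).2.2 (mem_inter.mp hxS).1
  · intro u v huv
    rcases huv with huv | huv
    · rcases h.adj_mem huv with ⟨hu, hv⟩ | ⟨hu, hv⟩
      exacts [Or.inl ⟨mem_insert_of_mem hu, hPS hv⟩, Or.inr ⟨hPS hu, mem_insert_of_mem hv⟩]
    · rcases (star_adj_iff.mp huv).2 with ⟨rfl, hv⟩ | ⟨rfl, hu⟩
      · exact Or.inl ⟨mem_insert_self _ _, hPS (by simp [hv])⟩
      · exact Or.inr ⟨hPS (by simp [hu]), mem_insert_self _ _⟩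
  · intro v hv
    rcases mem_union.mp hv with hv | hv
    · exact (h.deg_pos v hv).trans_le (deg_mono le_sup_left v)
    · have hvS := (mem_inter.mp hv).1
      refine deg_pos_of_adj (y := w) (Or.inr ?_ : (H ⊔ star w S).Adj v w)
      exact star_adj_iff.mpr ⟨fun hvw => hwS (hvw ▸ hvS), Or.inr ⟨rfl, hvS⟩⟩
  · intro x hx
    rcases mem_insert.mp hx with rfl | hx
    · rw [sup_comm, deg_sup_of_forall_not_adj (h.not_adj hwD (by simp [hwP, hwP₀, hwS])),
        deg_star_center hwS, hS]
    · obtain ⟨hxA, hxw, hxS⟩ := hD x hx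
      rw [deg_sup_of_forall_not_adj fun _ => star_not_adj hxw hxS, h.deg_eq x hx,
        sdiff_insert_union_union_eq_erase hSU hwS hwP₀, min_card_nbrW_erase (hpivot x hxA hxS)]

end IsPartialDPNash

lemma exists_isPartialDPNash (G : SimpleGraph V) (κ : V → ℕ) (A P₀ : Finset V)
    (hAP₀ : Disjoint A P₀) : ∃ D P H, IsPartialDPNash G κ A P₀ D P H := by
  induction A using Finset.strongInduction generalizing P₀ with
  | H A ih =>
  rcases A.eq_empty_or_nonempty with rfl | hA
  · exact ⟨∅, ∅, ⊥, .empty P₀⟩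
  obtain ⟨w, hwA, S, hSw, hS, hpivot⟩ := exists_pivot G κ subset_union_left hA
  have hssub : A \ insert w S ⊂ A := (ssubset_iff_of_subset sdiff_subset).mpr ⟨w, hwA, by simp⟩
  have hdisj : Disjoint (A \ insert w S) (P₀ ∪ S) :=
    disjoint_union_right.mpr ⟨hAP₀.mono_left sdiff_subset,
      disjoint_sdiff_self_left.mono_right (subset_insert w S)⟩
  obtain ⟨D, P, H, h⟩ := ih _ hssub (P₀ ∪ S) hdisj
  exact ⟨_, _, _, h.extend_star hwA (disjoint_left.mp hAP₀ hwA) hSw hS hpivot⟩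

/-- Every capacitated graph has at least one DP-Nash subgraph. -/
theorem stmt0 (G : SimpleGraph V) (κ : V → ℕ) :
    ∃ (D P : Finset V) (H : SimpleGraph V), IsDPNash G κ D P H := by
  obtain ⟨D, P, H, h⟩ := exists_isPartialDPNash G κ univ ∅ (disjoint_empty_right _)
  exact ⟨D, P, H, h.isDPNash⟩
end
end

section
/- Let (G,κ) be a capacitated graph with κ(x) ≤ d_G(x) for all x, and define X = {x : κ(x) = d_G(x)}, Y = N(X) \ X, Z = V(G) \ (X ∪ Y). If X ∪ Z is not an independent set in G, then (G,κ) has two DP-Nash subgraphs with distinct D-sets. -/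
open Finset
open scoped Classical

noncomputable section

variable {V : Type*} [Fintype V]

/-!
A DP-Nash subgraph exists for every capacitated graph, by induction on the edges. If some vertex
`v` is saturated (`κ v = d(v) > 0`), solve the problem on `G` minus the closed neighbourhood `N[v]`
with capacities truncated to the new degrees, then put `v` into `D` with its whole star (which
covers `N(v)`) and let every `D`-vertex outside `N[v]` recover its lost capacity with edges into
`N(v)`. If no vertex is saturated, any edge can be deleted without breaking `κ ≤ d`.

For the theorem, take an edge `uv` inside `X ∪ Z` with `κ u > 0`. Cutting the edges at `u` down to
`κ u` of them, `v` among them, saturates `u`; this keeps `κ ≤ d` since for `u ∈ X` nothing is cut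
and for `u ∈ Z` no neighbour of `u` is in `X`, so all have slack. This yields a DP-Nash subgraph
with `u ∈ D` and `v ∈ P`. The same cut at `v` (keeping any `κ v` of its edges) yields one with
`v ∈ D`.
-/

set_option linter.unusedSectionVars false

lemma deg_eq_card_neighborFinset (G : SimpleGraph V) (x : V) :
    deg G x = #(G.neighborFinset x) := by
  rw [SimpleGraph.neighborFinset_eq_filter, deg]

lemma deg_pos_iff {G : SimpleGraph V} {x : V} : 0 < deg G x ↔ ∃ y, G.Adj x y := by
  simp [deg, card_pos, Finset.Nonempty]

lemma deg_le_deg_of_adj {G G' : SimpleGraph V} {x : V} (h : ∀ y, G.Adj x y → G'.Adj x y) :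
    deg G x ≤ deg G' x :=
  card_le_card fun y hy => by simpa using h y (by simpa using hy)

lemma deg_le_deg_add_one_of_adj {G G' : SimpleGraph V} {x z : V}
    (h : ∀ y, G.Adj x y → y ≠ z → G'.Adj x y) : deg G x ≤ deg G' x + 1 :=
  calc deg G x ≤ #(insert z (univ.filter (G'.Adj x))) :=
        card_le_card fun y hy => by
          by_cases hyz : y = z
          · simp [hyz]
          · simpa using Or.inr (h y (by simpa using hy) hyz)
    _ ≤ deg G' x + 1 := card_insert_le _ _

/-- `(G, κ)` is a capacitated graph. -/
def IsCapacity (G : SimpleGraph V) (κ : V → ℕ) : Prop :=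
  (∀ v, κ v ≤ deg G v) ∧ ∀ u v, G.Adj u v → 0 < κ u ∨ 0 < κ v

lemma IsCapacity.of_le {G G' : SimpleGraph V} {κ : V → ℕ} (hκ : IsCapacity G κ) (hG : G' ≤ G)
    (hdeg : ∀ v, κ v ≤ deg G' v) : IsCapacity G' κ :=
  ⟨hdeg, fun u v huv => hκ.2 u v (hG huv)⟩

def truncCap (G : SimpleGraph V) (κ : V → ℕ) (v : V) : ℕ := min (κ v) (deg G v)

lemma IsCapacity.truncCap {G G' : SimpleGraph V} {κ : V → ℕ} (hκ : IsCapacity G κ)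
    (hG : G' ≤ G) : IsCapacity G' (truncCap G' κ) := by
  refine ⟨fun v => min_le_right _ _, fun u v huv => ?_⟩
  rcases hκ.2 u v (hG huv) with hu | hv
  · exact Or.inl (lt_min hu (deg_pos_iff.2 ⟨v, huv⟩))
  · exact Or.inr (lt_min hv (deg_pos_iff.2 ⟨u, huv.symm⟩))

/-- A DP-Nash subgraph `H` with `D`-set `D` and `P = Dᶜ`, with `d_H(x) = κ x` in place of
`min (d_G x) (κ x)`; the two agree when `κ ≤ d_G`. -/
def IsNashDSet (G : SimpleGraph V) (κ : V → ℕ) (H : SimpleGraph V) (D : Finset V) : Prop :=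
  H ≤ G ∧ (∀ ⦃u v⦄, H.Adj u v → (u ∈ D ↔ v ∉ D)) ∧ (∀ v ∉ D, 0 < deg H v) ∧
    ∀ x ∈ D, deg H x = κ x

namespace IsNashDSet

variable {G G' H : SimpleGraph V} {κ : V → ℕ} {D : Finset V}

lemma mono (h : IsNashDSet G' κ H D) (hG : G' ≤ G) : IsNashDSet G κ H D :=
  ⟨h.1.trans hG, h.2⟩

lemma isDPNash (h : IsNashDSet G κ H D) (hκ : ∀ v, κ v ≤ deg G v) :
    IsDPNash G κ D Dᶜ H := by
  obtain ⟨hHG, hbip, hP, hD⟩ := h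
  refine ⟨hHG, union_compl D, disjoint_compl_right, fun u v huv => ?_,
    fun v hv => hP v (mem_compl.1 hv), fun x hx => by rw [hD x hx, min_eq_right (hκ x)]⟩
  have := hbip huv
  by_cases hu : u ∈ D <;> simp_all

end IsNashDSet

lemma isNashDSet_univ_bot {G : SimpleGraph V} {κ : V → ℕ} (hκ : ∀ v, κ v ≤ deg G v)
    (hG : ∀ u v, ¬ G.Adj u v) : IsNashDSet G κ ⊥ univ := by
  refine ⟨bot_le, by simp, by simp, fun x _ => ?_⟩
  have := hκ x
  simp_all [deg]

def keepEdgesAt (G : SimpleGraph V) (w : V) (K : Finset V) : SimpleGraph V where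
  Adj a b := G.Adj a b ∧ (a = w → b ∈ K) ∧ (b = w → a ∈ K)
  symm := ⟨fun _ _ h => ⟨h.1.symm, h.2.2, h.2.1⟩⟩
  loopless := ⟨fun a h => G.loopless.irrefl a h.1⟩

section keepEdgesAt

variable {G : SimpleGraph V} {w : V} {K : Finset V}

lemma keepEdgesAt_le : keepEdgesAt G w K ≤ G := fun _ _ h => h.1

lemma keepEdgesAt_lt {y : V} (hy : G.Adj w y) (hyK : y ∉ K) : keepEdgesAt G w K < G :=
  lt_of_le_of_ne keepEdgesAt_le fun h => hyK <| by
    have : (keepEdgesAt G w K).Adj w y := by rw [h]; exact hy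
    exact this.2.1 rfl

lemma deg_keepEdgesAt_self (hK : K ⊆ G.neighborFinset w) : deg (keepEdgesAt G w K) w = #K := by
  unfold deg
  congr 1
  ext y
  have hwy : y ∈ K → G.Adj w y := fun hy => (G.mem_neighborFinset w y).1 (hK hy)
  simp only [mem_filter, mem_univ, true_and]
  exact ⟨fun h => h.2.1 rfl,
    fun hy => ⟨hwy hy, fun _ => hy, fun h => absurd h (G.ne_of_adj (hwy hy)).symm⟩⟩

lemma le_deg_keepEdgesAt {κ : V → ℕ} (hκ : ∀ v, κ v ≤ deg G v) (hK : K ⊆ G.neighborFinset w)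
    (hw : κ w ≤ #K) (hslack : ∀ y, G.Adj w y → y ∉ K → κ y < deg G y) (z : V) :
    κ z ≤ deg (keepEdgesAt G w K) z := by
  by_cases hzw : z = w
  · rw [hzw, deg_keepEdgesAt_self hK]
    exact hw
  have hkeep : ∀ y, G.Adj z y → y ≠ w → (keepEdgesAt G w K).Adj z y :=
    fun y hzy hyw => ⟨hzy, fun h => absurd h hzw, fun h => absurd h hyw⟩
  by_cases hcut : G.Adj w z ∧ z ∉ K
  · have := deg_le_deg_add_one_of_adj hkeep
    have := hslack z hcut.1 hcut.2
    omega
  · refine (hκ z).trans (deg_le_deg_of_adj fun y hzy => ?_)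
    by_cases hyw : y = w
    · subst hyw
      exact ⟨hzy, fun h => absurd h hzw, fun _ => not_and_not_right.1 hcut hzy.symm⟩
    · exact hkeep y hzy hyw

end keepEdgesAt

def closedNbhd (G : SimpleGraph V) (v : V) : Finset V := insert v (G.neighborFinset v)

lemma mem_closedNbhd {G : SimpleGraph V} {v y : V} : y ∈ closedNbhd G v ↔ y = v ∨ G.Adj v y := by
  simp [closedNbhd]

def deleteClosedNbhd (G : SimpleGraph V) (v : V) : SimpleGraph V where
  Adj a b := G.Adj a b ∧ a ∉ closedNbhd G v ∧ b ∉ closedNbhd G v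
  symm := ⟨fun _ _ h => ⟨h.1.symm, h.2.2, h.2.1⟩⟩
  loopless := ⟨fun a h => G.loopless.irrefl a h.1⟩

section deleteClosedNbhd

variable {G : SimpleGraph V} {v : V}

lemma deleteClosedNbhd_le : deleteClosedNbhd G v ≤ G := fun _ _ h => h.1

lemma deleteClosedNbhd_lt {y : V} (hy : G.Adj v y) : deleteClosedNbhd G v < G :=
  lt_of_le_of_ne deleteClosedNbhd_le fun h => by
    have : (deleteClosedNbhd G v).Adj v y := by rw [h]; exact hy
    exact this.2.1 (mem_closedNbhd.2 (Or.inl rfl))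

lemma deg_eq_deg_deleteClosedNbhd_add {z : V} (hz : z ∉ closedNbhd G v) :
    deg G z = deg (deleteClosedNbhd G v) z + #{y | G.Adj z y ∧ y ∈ closedNbhd G v} := by
  rw [deg, ← card_filter_add_card_filter_not (· ∉ closedNbhd G v), filter_filter,
    filter_filter]
  simp [deleteClosedNbhd, deg, hz]

end deleteClosedNbhd

def bipartiteOf (D : Finset V) (R : V → V → Prop) : SimpleGraph V :=
  SimpleGraph.fromRel fun a b => a ∈ D ∧ b ∉ D ∧ R a b

section bipartiteOf

variable {D : Finset V} {R : V → V → Prop} {x y : V}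

lemma bipartiteOf_adj_iff_of_mem (hx : x ∈ D) : (bipartiteOf D R).Adj x y ↔ y ∉ D ∧ R x y := by
  simp only [bipartiteOf, SimpleGraph.fromRel_adj]
  exact ⟨fun h => h.2.elim (fun h => h.2) fun h => absurd hx h.2.1,
    fun h => ⟨fun hxy => h.1 (hxy ▸ hx), Or.inl ⟨hx, h⟩⟩⟩

lemma bipartiteOf_adj_iff_of_notMem (hx : x ∉ D) :
    (bipartiteOf D R).Adj x y ↔ y ∈ D ∧ R y x := by
  rw [SimpleGraph.adj_comm]
  constructor
  · intro h
    by_cases hy : y ∈ D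
    · exact ⟨hy, ((bipartiteOf_adj_iff_of_mem hy).1 h).2⟩
    · simp only [bipartiteOf, SimpleGraph.fromRel_adj] at h
      exact h.2.elim (fun h => absurd h.1 hy) fun h => absurd h.1 hx
  · exact fun h => (bipartiteOf_adj_iff_of_mem h.1).2 ⟨hx, h.2⟩

lemma bipartiteOf_mem_iff (h : (bipartiteOf D R).Adj x y) : x ∈ D ↔ y ∉ D := by
  by_cases hx : x ∈ D
  · exact iff_of_true hx ((bipartiteOf_adj_iff_of_mem hx).1 h).1
  · exact iff_of_false hx (not_not.2 ((bipartiteOf_adj_iff_of_notMem hx).1 h).1)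

lemma bipartiteOf_le {G : SimpleGraph V} (hR : ∀ a b, a ∈ D → b ∉ D → R a b → G.Adj a b) :
    bipartiteOf D R ≤ G := by
  intro a b h
  by_cases ha : a ∈ D
  · exact hR a b ha ((bipartiteOf_adj_iff_of_mem ha).1 h).1 ((bipartiteOf_adj_iff_of_mem ha).1 h).2
  · obtain ⟨hb, hba⟩ := (bipartiteOf_adj_iff_of_notMem ha).1 h
    exact (hR b a hb ha hba).symm

end bipartiteOf

section star

variable {G H' : SimpleGraph V} {κ κ' : V → ℕ} {v : V} {D' : Finset V} {T : V → Finset V}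

def starDSet (G : SimpleGraph V) (v : V) (D' : Finset V) : Finset V :=
  insert v (D' \ closedNbhd G v)

lemma mem_starDSet_of_mem_closedNbhd {y : V} (hy : y ∈ closedNbhd G v) :
    y ∈ starDSet G v D' ↔ y = v := by
  simp [starDSet, hy]

lemma mem_starDSet_of_notMem_closedNbhd {y : V} (hy : y ∉ closedNbhd G v) :
    y ∈ starDSet G v D' ↔ y ∈ D' := by
  have hyv : y ≠ v := fun h => hy (mem_closedNbhd.2 (Or.inl h))
  simp [starDSet, hy, hyv]

lemma notMem_starDSet_of_adj {x y : V} (hxy : G.Adj x y) (hx : x ∉ closedNbhd G v ∨ x = v)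
    (hy : y ∈ closedNbhd G v) : y ∉ starDSet G v D' := by
  rw [mem_starDSet_of_mem_closedNbhd hy]
  rintro rfl
  rcases hx with hx | rfl
  exacts [hx (mem_closedNbhd.2 (Or.inr hxy.symm)), G.loopless.irrefl _ hxy]

/-- Put `v` into `D` with its whole star, keep the solution `H'` on `G` minus the closed
neighbourhood of `v`, and let each `D`-vertex `x` outside it make up its lost capacity with the
edges from `x` to `T x`. -/
def starGraph (G H' : SimpleGraph V) (v : V) (D' : Finset V) (T : V → Finset V) :
    SimpleGraph V :=
  bipartiteOf (starDSet G v D')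
    fun a b => H'.Adj a b ∨ (a = v ∧ G.Adj v b) ∨ (a ∉ closedNbhd G v ∧ b ∈ T a)

lemma starGraph_le (hH' : H' ≤ deleteClosedNbhd G v)
    (hT : ∀ x ∉ closedNbhd G v, ∀ y ∈ T x, G.Adj x y ∧ y ∈ closedNbhd G v) :
    starGraph G H' v D' T ≤ G := by
  refine bipartiteOf_le ?_
  rintro a b - - (h | ⟨rfl, h⟩ | ⟨ha, hb⟩)
  exacts [(hH' h).1, h, (hT a ha b hb).1]

lemma deg_starGraph_self (hH' : H' ≤ deleteClosedNbhd G v) :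
    deg (starGraph G H' v D' T) v = deg G v := by
  have hvN : v ∈ closedNbhd G v := mem_closedNbhd.2 (Or.inl rfl)
  have hvD : v ∈ starDSet G v D' := mem_insert_self _ _
  unfold deg
  congr 1
  ext y
  simp only [mem_filter, mem_univ, true_and, starGraph,
    bipartiteOf_adj_iff_of_mem hvD]
  refine ⟨fun ⟨_, h⟩ => ?_, fun h => ⟨notMem_starDSet_of_adj h (Or.inr rfl)
    (mem_closedNbhd.2 (Or.inr h)), Or.inr (Or.inl h)⟩⟩
  rcases h with h | h | ⟨h, -⟩
  exacts [absurd hvN (hH' h).2.1, h, absurd hvN h]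

lemma deg_starGraph_of_mem (hH' : IsNashDSet (deleteClosedNbhd G v) κ' H' D')
    (hT : ∀ x ∉ closedNbhd G v, ∀ y ∈ T x, G.Adj x y ∧ y ∈ closedNbhd G v) {x : V}
    (hxD' : x ∈ D') (hxN : x ∉ closedNbhd G v) :
    deg (starGraph G H' v D' T) x = deg H' x + #(T x) := by
  have hxv : x ≠ v := fun h => hxN (mem_closedNbhd.2 (Or.inl h))
  have hx : x ∈ starDSet G v D' := (mem_starDSet_of_notMem_closedNbhd hxN).2 hxD'
  have hdisj : Disjoint (univ.filter (H'.Adj x)) (T x) := disjoint_left.2 fun y hy hyT =>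
    (hH'.1 (mem_filter.1 hy).2).2.2 (hT x hxN y hyT).2
  rw [deg, deg, ← card_union_of_disjoint hdisj]
  congr 1
  ext y
  simp only [mem_filter, mem_univ, true_and, mem_union, starGraph, bipartiteOf_adj_iff_of_mem hx]
  constructor
  · rintro ⟨-, h | ⟨rfl, -⟩ | ⟨-, h⟩⟩
    exacts [Or.inl h, absurd rfl hxv, Or.inr h]
  · rintro (h | h)
    · exact ⟨(mem_starDSet_of_notMem_closedNbhd (hH'.1 h).2.2).not.2 ((hH'.2.1 h).1 hxD'),
        Or.inl h⟩
    · exact ⟨notMem_starDSet_of_adj (hT x hxN y h).1 (Or.inl hxN) (hT x hxN y h).2,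
        Or.inr (Or.inr ⟨hxN, h⟩)⟩

lemma deg_starGraph_pos (hH' : IsNashDSet (deleteClosedNbhd G v) κ' H' D') {p : V}
    (hp : p ∉ starDSet G v D') : 0 < deg (starGraph G H' v D' T) p := by
  rw [deg_pos_iff]
  by_cases hpN : p ∈ closedNbhd G v
  · have hvp : G.Adj v p :=
      (mem_closedNbhd.1 hpN).resolve_left ((mem_starDSet_of_mem_closedNbhd hpN).not.1 hp)
    exact ⟨v, (bipartiteOf_adj_iff_of_notMem hp).2
      ⟨mem_insert_self v _, Or.inr (Or.inl ⟨rfl, hvp⟩)⟩⟩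
  · have hpD' : p ∉ D' := (mem_starDSet_of_notMem_closedNbhd hpN).not.1 hp
    obtain ⟨y, hpy⟩ := deg_pos_iff.1 (hH'.2.2.1 p hpD')
    have hyD' : y ∈ D' := not_not.1 ((hH'.2.1 hpy).not.1 hpD')
    exact ⟨y, (bipartiteOf_adj_iff_of_notMem hp).2
      ⟨(mem_starDSet_of_notMem_closedNbhd (hH'.1 hpy).2.2).2 hyD', Or.inl hpy.symm⟩⟩

theorem isNashDSet_starGraph (hv : κ v = deg G v)
    (hH' : IsNashDSet (deleteClosedNbhd G v) (truncCap (deleteClosedNbhd G v) κ) H' D')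
    (hT : ∀ x ∉ closedNbhd G v, ∀ y ∈ T x, G.Adj x y ∧ y ∈ closedNbhd G v)
    (hTcard : ∀ x ∉ closedNbhd G v, #(T x) = κ x - truncCap (deleteClosedNbhd G v) κ x) :
    IsNashDSet G κ (starGraph G H' v D' T) (starDSet G v D') := by
  refine ⟨starGraph_le hH'.1 hT, fun _ _ => bipartiteOf_mem_iff, fun p => deg_starGraph_pos hH',
    fun x hx => ?_⟩
  rcases mem_insert.1 hx with rfl | hx
  · rw [deg_starGraph_self hH'.1, hv]
  · obtain ⟨hxD', hxN⟩ := mem_sdiff.1 hx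
    have htrunc : truncCap (deleteClosedNbhd G v) κ x ≤ κ x := min_le_left _ _
    rw [deg_starGraph_of_mem hH' hT hxD' hxN, hH'.2.2.2 x hxD', hTcard x hxN]
    omega

end star

theorem exists_isNashDSet_of_deleteClosedNbhd {G : SimpleGraph V} {κ : V → ℕ} {v : V}
    (hκ : ∀ x, κ x ≤ deg G x) (hv : κ v = deg G v)
    (h : ∃ D H, IsNashDSet (deleteClosedNbhd G v) (truncCap (deleteClosedNbhd G v) κ) H D) :
    ∃ D H, IsNashDSet G κ H D ∧ v ∈ D ∧ ∀ y, G.Adj v y → y ∉ D := by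
  obtain ⟨D', H', hH'⟩ := h
  have hT : ∀ x ∉ closedNbhd G v, ∃ t ⊆ ({y | G.Adj x y ∧ y ∈ closedNbhd G v} : Finset V),
      #t = κ x - truncCap (deleteClosedNbhd G v) κ x := fun x hx =>
    exists_subset_card_eq <| by
      have := deg_eq_deg_deleteClosedNbhd_add hx
      have := hκ x
      unfold truncCap
      omega
  choose! T hTsub hTcard using hT
  exact ⟨_, _, isNashDSet_starGraph hv hH' (fun x hx y hy => by simpa using hTsub x hx hy) hTcard,
    mem_insert_self _ _, fun y hvy =>
      notMem_starDSet_of_adj hvy (Or.inr rfl) (mem_closedNbhd.2 (Or.inr hvy))⟩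

theorem exists_isNashDSet {G : SimpleGraph V} {κ : V → ℕ} (hκ : IsCapacity G κ) :
    ∃ D H, IsNashDSet G κ H D := by
  induction G using WellFoundedLT.induction generalizing κ with
  | _ G ih =>
  by_cases hsat : ∃ v y, G.Adj v y ∧ κ v = deg G v
  · obtain ⟨v, y, hvy, hv⟩ := hsat
    obtain ⟨D, H, hDH, -⟩ := exists_isNashDSet_of_deleteClosedNbhd hκ.1 hv
      (ih _ (deleteClosedNbhd_lt hvy) (hκ.truncCap deleteClosedNbhd_le))
    exact ⟨D, H, hDH⟩
  by_cases hG : ∃ a b, G.Adj a b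
  · obtain ⟨a, b, hab⟩ := hG
    have hslack : ∀ x y, G.Adj x y → κ x < deg G x := fun x y hxy =>
      (hκ.1 x).lt_of_ne fun h => hsat ⟨x, y, hxy, h⟩
    have hdeg : κ a ≤ #((G.neighborFinset a).erase b) := by
      rw [card_erase_of_mem ((G.mem_neighborFinset a b).2 hab), ← deg_eq_card_neighborFinset]
      have := hslack a b hab
      omega
    obtain ⟨D, H, hDH⟩ := ih _ (keepEdgesAt_lt hab (notMem_erase b _)) <| hκ.of_le keepEdgesAt_le
      (le_deg_keepEdgesAt hκ.1 (erase_subset _ _) hdeg fun y hay _ => hslack y a hay.symm)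
    exact ⟨D, H, hDH.mono keepEdgesAt_le⟩
  · simp only [not_exists] at hG
    exact ⟨univ, ⊥, isNashDSet_univ_bot hκ.1 hG⟩

theorem exists_isNashDSet_of_saturated {G : SimpleGraph V} {κ : V → ℕ} (hκ : IsCapacity G κ)
    {v : V} (hv : κ v = deg G v) :
    ∃ D H, IsNashDSet G κ H D ∧ v ∈ D ∧ ∀ y, G.Adj v y → y ∉ D :=
  exists_isNashDSet_of_deleteClosedNbhd hκ.1 hv
    (exists_isNashDSet (hκ.truncCap deleteClosedNbhd_le))

theorem exists_isNashDSet_of_subset_neighborFinset {G : SimpleGraph V} {κ : V → ℕ}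
    (hκ : IsCapacity G κ) {w : V} {K : Finset V} (hK : K ⊆ G.neighborFinset w) (hKcard : #K = κ w)
    (hslack : ∀ y, G.Adj w y → y ∉ K → κ y < deg G y) :
    ∃ D H, IsNashDSet G κ H D ∧ w ∈ D ∧ ∀ y ∈ K, y ∉ D := by
  obtain ⟨D, H, hDH, hwD, hnbr⟩ := exists_isNashDSet_of_saturated
    (hκ.of_le keepEdgesAt_le (le_deg_keepEdgesAt hκ.1 hK hKcard.ge hslack))
    (by rw [deg_keepEdgesAt_self hK, hKcard])
  refine ⟨D, H, hDH.mono keepEdgesAt_le, hwD, fun y hy => hnbr y ?_⟩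
  have hwy : G.Adj w y := (G.mem_neighborFinset w y).1 (hK hy)
  exact ⟨hwy, fun _ => hy, fun h => absurd h (G.ne_of_adj hwy).symm⟩

lemma mem_XX {G : SimpleGraph V} {κ : V → ℕ} {x : V} : x ∈ XX G κ ↔ κ x = deg G x := by
  simp [XX]

lemma notMem_XX_of_mem_ZZ_of_adj {G : SimpleGraph V} {κ : V → ℕ} {z y : V} (hz : z ∈ ZZ G κ)
    (hzy : G.Adj z y) : y ∉ XX G κ := fun hy => by
  simp only [ZZ, YY, mem_sdiff, mem_union, mem_filter, mem_univ, true_and, not_or] at hz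
  exact hz.2 ⟨hz.1, y, hy, hzy.symm⟩

lemma lt_deg_of_mem_XX_union_ZZ {G : SimpleGraph V} {κ : V → ℕ} (hκ : ∀ v, κ v ≤ deg G v)
    {w y : V} {K : Finset V} (hw : w ∈ XX G κ ∪ ZZ G κ) (hK : K ⊆ G.neighborFinset w)
    (hKcard : #K = κ w) (hwy : G.Adj w y) (hyK : y ∉ K) : κ y < deg G y := by
  rcases mem_union.1 hw with hwX | hwZ
  · have hKN : K = G.neighborFinset w := eq_of_subset_of_card_le hK <| by
      rw [hKcard, mem_XX.1 hwX, deg_eq_card_neighborFinset]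
    exact absurd (hKN ▸ (G.mem_neighborFinset w y).2 hwy) hyK
  · exact (hκ y).lt_of_ne fun h => notMem_XX_of_mem_ZZ_of_adj hwZ hwy (mem_XX.2 h)

/-- If `X ∪ Z` is not independent then there are two DP-Nash subgraphs
with distinct `D`-sets. -/
theorem stmt4 (G : SimpleGraph V) (κ : V → ℕ) (hκ : ∀ v, κ v ≤ deg G v)
    (hedge : ∀ u v, G.Adj u v → 0 < κ u ∨ 0 < κ v)
    (hnind : ∃ u ∈ XX G κ ∪ ZZ G κ, ∃ v ∈ XX G κ ∪ ZZ G κ, G.Adj u v) :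
    ∃ (D₁ P₁ : Finset V) (H₁ : SimpleGraph V) (D₂ P₂ : Finset V) (H₂ : SimpleGraph V),
      IsDPNash G κ D₁ P₁ H₁ ∧ IsDPNash G κ D₂ P₂ H₂ ∧ D₁ ≠ D₂ := by
  obtain ⟨u, hu, v, hv, huv⟩ := hnind
  wlog hκu : 0 < κ u generalizing u v
  · exact this v hv u hu huv.symm ((hedge u v huv).resolve_left hκu)
  have hdeg (x : V) : κ x ≤ #(G.neighborFinset x) :=
    (hκ x).trans_eq (deg_eq_card_neighborFinset G x)
  obtain ⟨K₁, hvK₁, hK₁, hK₁card⟩ := exists_subsuperset_card_eq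
    (singleton_subset_iff.2 ((G.mem_neighborFinset u v).2 huv)) ((card_singleton v).trans_le hκu)
    (hdeg u)
  obtain ⟨K₂, hK₂, hK₂card⟩ := exists_subset_card_eq (hdeg v)
  obtain ⟨D₁, H₁, h₁, -, hvD₁⟩ := exists_isNashDSet_of_subset_neighborFinset ⟨hκ, hedge⟩ hK₁
    hK₁card fun y => lt_deg_of_mem_XX_union_ZZ hκ hu hK₁ hK₁card
  obtain ⟨D₂, H₂, h₂, hvD₂, -⟩ := exists_isNashDSet_of_subset_neighborFinset ⟨hκ, hedge⟩ hK₂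
    hK₂card fun y => lt_deg_of_mem_XX_union_ZZ hκ hv hK₂ hK₂card
  exact ⟨D₁, D₁ᶜ, H₁, D₂, D₂ᶜ, H₂, h₁.isDPNash hκ, h₂.isDPNash hκ,
    fun h => hvD₁ v (singleton_subset_iff.1 hvK₁) (h ▸ hvD₂)⟩
end
end

section
/- Let (G,κ) be a capacitated graph with κ(x) ≤ d_G(x) for all x. If for every nonempty W ⊆ Y^{κ>0} there is no matching from L(W) to W^κ of size |L(W)| in G^aux (property M*), then for every nonempty W ⊆ Y^{κ>0} one has |L(W)| > |W^κ| (property O*). -/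
/-!
Strong induction on `W`. Since `M*` fails for `W`, Hall's theorem in `G^aux` yields
`S ⊆ L(W)` whose neighbourhood `N` in `W` satisfies `|N^κ| < |S|`. If `N = W` we are done.
Otherwise `W \ N` is a smaller nonempty set, so `|(W \ N)^κ| < |L(W \ N)|`; and `L(W \ N)`
is a subset of `L(W)` disjoint from `S`, because each of its vertices has a neighbour in
`W \ N`, hence outside `N`. Adding the two inequalities gives `|W^κ| < |L(W)|`.
-/

open Finset
open scoped Classical

noncomputable section

variable {V : Type*} [Fintype V]

theorem exists_injOn_capacitated_of_hall {α β : Type*} [Nonempty β] (L : Finset α)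
    (W : Finset β) (r : α → β → Prop) (κ : β → ℕ)
    (hall : ∀ S ⊆ L, #S ≤ ∑ w ∈ W.filter (fun w => ∃ x ∈ S, r x w), κ w) :
    ∃ f : α → β × ℕ, Set.InjOn f L ∧
      ∀ x ∈ L, (f x).1 ∈ W ∧ r x (f x).1 ∧ (f x).2 < κ (f x).1 := by
  classical
  let t : L → Finset (Σ _ : β, ℕ) := fun x => (W.filter (r x)).sigma fun w => range (κ w)
  have ht : ∀ s : Finset L, #s ≤ #(s.biUnion t) := by
    intro s
    let S := s.map (Function.Embedding.subtype _)
    calc #s = #S := (card_map _).symm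
      _ ≤ ∑ w ∈ W.filter (fun w => ∃ x ∈ S, r x w), κ w :=
          hall S fun x hx => by obtain ⟨y, -, rfl⟩ := mem_map.mp hx; exact y.2
      _ = #((W.filter fun w => ∃ x ∈ S, r x w).sigma fun w => range (κ w)) := by
          simp only [card_sigma, card_range]
      _ ≤ #(s.biUnion t) := card_le_card fun p hp => by
          simp only [S, t, mem_sigma, mem_filter, mem_map, Function.Embedding.coe_subtype,
            mem_biUnion] at hp ⊢
          obtain ⟨⟨hw, _, ⟨y, hy, rfl⟩, hr⟩, hi⟩ := hp
          exact ⟨y, hy, ⟨hw, hr⟩, hi⟩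
  obtain ⟨f₀, hinj, hf₀⟩ := (all_card_le_biUnion_card_iff_existsInjective' t).mp ht
  let e := Equiv.sigmaEquivProd β ℕ
  refine ⟨fun x => if h : x ∈ L then e (f₀ ⟨x, h⟩) else (Classical.arbitrary β, 0), ?_, ?_⟩
  · intro x hx y hy hxy
    simp only [dif_pos (mem_coe.mp hx), dif_pos (mem_coe.mp hy)] at hxy
    exact congrArg Subtype.val (hinj (e.injective hxy))
  · intro x hx
    have := hf₀ ⟨x, hx⟩
    simp only [t, mem_sigma, mem_filter, mem_range] at this
    simpa only [dif_pos hx] using ⟨this.1.1, this.1.2, this.2⟩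

section

variable {G : SimpleGraph V} {κ : V → ℕ}

theorem LL_mono {W' W : Finset V} (h : W' ⊆ W) : LL G κ W' ⊆ LL G κ W := by
  intro x hx
  rw [LL, mem_filter] at hx ⊢
  refine ⟨hx.1, hx.2.trans_le (card_le_card fun y hy => ?_)⟩
  rw [nbrW, mem_filter] at hy ⊢
  exact ⟨hy.1, hy.2.1, h hy.2.2⟩

theorem exists_adj_of_mem_LL {W : Finset V} {x : V} (hx : x ∈ LL G κ W) :
    ∃ w ∈ W, G.Adj x w := by
  obtain ⟨w, hw⟩ := card_pos.mp (Nat.zero_lt_of_lt (mem_filter.mp hx).2)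
  exact ⟨w, (mem_filter.mp hw).2.2, (mem_filter.mp hw).2.1⟩

theorem disjoint_LL_sdiff_neighbors {S W : Finset V} :
    Disjoint S (LL G κ (W \ W.filter fun w => ∃ x ∈ S, G.Adj x w)) :=
  disjoint_left.mpr fun x hxS hx => by
    obtain ⟨w, hw, hxw⟩ := exists_adj_of_mem_LL hx
    exact (mem_sdiff.mp hw).2 (mem_filter.mpr ⟨(mem_sdiff.mp hw).1, x, hxS, hxw⟩)

end

theorem stmt8_general (G : SimpleGraph V) (κ : V → ℕ)
    (hM : ∀ W : Finset V, W.Nonempty → W ⊆ Ypos G κ →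
      ¬ ∃ f : V → V × ℕ, Set.InjOn f ↑(LL G κ W) ∧
        ∀ x ∈ LL G κ W, (f x).1 ∈ W ∧ G.Adj x (f x).1 ∧ (f x).2 < κ (f x).1) :
    ∀ W : Finset V, W.Nonempty → W ⊆ Ypos G κ → ∑ w ∈ W, κ w < (LL G κ W).card := by
  intro W
  induction W using Finset.strongInduction with
  | H W ih =>
  intro hW hWY
  have : Nonempty V := hW.to_subtype.map Subtype.val
  obtain ⟨S, hSL, hS⟩ :
      ∃ S ⊆ LL G κ W, ∑ w ∈ W.filter (fun w => ∃ x ∈ S, G.Adj x w), κ w < #S := by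
    by_contra! hall
    exact hM W hW hWY (exists_injOn_capacitated_of_hall _ _ _ _ hall)
  set N := W.filter fun w => ∃ x ∈ S, G.Adj x w
  have hNW : N ⊆ W := filter_subset _ _
  by_cases hN : N = W
  · calc ∑ w ∈ W, κ w = ∑ w ∈ N, κ w := by rw [hN]
      _ < #S := hS
      _ ≤ #(LL G κ W) := card_le_card hSL
  have hN_nonempty : N.Nonempty := by
    obtain ⟨x, hx⟩ := card_pos.mp (Nat.zero_lt_of_lt hS)
    obtain ⟨w, hw, hxw⟩ := exists_adj_of_mem_LL (hSL hx)
    exact ⟨w, mem_filter.mpr ⟨hw, x, hx, hxw⟩⟩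
  have hrest := ih (W \ N) (sdiff_ssubset hNW hN_nonempty)
    (sdiff_nonempty.mpr fun h => hN (hNW.antisymm h)) (sdiff_subset.trans hWY)
  have hdisj : Disjoint S (LL G κ (W \ N)) := disjoint_LL_sdiff_neighbors
  calc ∑ w ∈ W, κ w = ∑ w ∈ N, κ w + ∑ w ∈ W \ N, κ w := by
        rw [add_comm, sum_sdiff hNW]
    _ < #S + #(LL G κ (W \ N)) := Nat.add_lt_add hS hrest
    _ = #(S ∪ LL G κ (W \ N)) := (card_union_of_disjoint hdisj).symm
    _ ≤ #(LL G κ W) := card_le_card (union_subset hSL (LL_mono sdiff_subset))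

/-- Property `M*` implies property `O*`: if no nonempty `W ⊆ Y^{κ>0}` admits a
matching in `G^aux` from `L(W)` into `W^κ` saturating `L(W)`, then every
nonempty `W ⊆ Y^{κ>0}` satisfies `|L(W)| > |W^κ|`. -/
theorem stmt8 (G : SimpleGraph V) (κ : V → ℕ) (hκ : ∀ v, κ v ≤ deg G v)
    (hM : ∀ W : Finset V, W.Nonempty → W ⊆ Ypos G κ →
      ¬ ∃ f : V → V × ℕ, Set.InjOn f ↑(LL G κ W) ∧
        ∀ x ∈ LL G κ W, (f x).1 ∈ W ∧ G.Adj x (f x).1 ∧ (f x).2 < κ (f x).1) :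
    ∀ W : Finset V, W.Nonempty → W ⊆ Ypos G κ → ∑ w ∈ W, κ w < (LL G κ W).card :=
  stmt8_general G κ hM
end
end

section
/- Let (G,κ) be a capacitated graph with κ(x) ≤ d_G(x) for all x, with X ∪ Z independent. If for every nonempty W ⊆ Y^{κ>0}, |L(W)| > |W^κ| (property O*), then every DP-Nash subgraph of (G,κ) has D-set equal to X ∪ Z; i.e., (G,κ) has a unique D-set. -/
open Finset
open scoped Classical

noncomputable section

variable {V : Type*} [Fintype V]

/-- Property `O*` implies that every DP-Nash subgraph has `D`-set `X ∪ Z`. -/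
theorem stmt9 (G : SimpleGraph V) (κ : V → ℕ) (hκ : ∀ v, κ v ≤ deg G v)
    (hedge : ∀ u v, G.Adj u v → 0 < κ u ∨ 0 < κ v)
    (hind : ∀ u ∈ XX G κ ∪ ZZ G κ, ∀ v ∈ XX G κ ∪ ZZ G κ, ¬ G.Adj u v)
    (hO : ∀ W : Finset V, W.Nonempty → W ⊆ Ypos G κ → ∑ w ∈ W, κ w < (LL G κ W).card) :
    ∀ (D P : Finset V) (H : SimpleGraph V), IsDPNash G κ D P H → D = XX G κ ∪ ZZ G κ := by
  rintro D P H ⟨hHG, hcover, hdisj, hbip, hP, hD⟩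
  have hfsub : ∀ x : V, Finset.univ.filter (H.Adj x) ⊆ Finset.univ.filter (G.Adj x) := by
    intro x y hy
    rw [Finset.mem_filter] at hy ⊢
    exact ⟨hy.1, hHG hy.2⟩
  have hDdeg : ∀ x ∈ D, deg H x = κ x := fun x hx => by
    rw [hD x hx, min_eq_right (hκ x)]
  have hmemDP : ∀ v : V, v ∈ D ∨ v ∈ P := fun v => by
    have : v ∈ D ∪ P := hcover ▸ Finset.mem_univ v
    simpa [Finset.mem_union] using this
  have hbip' : ∀ ⦃u v⦄, H.Adj u v → u ∈ D → v ∈ P := by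
    intro u v h hu
    rcases hbip h with ⟨_, h2⟩ | ⟨h1, _⟩
    · exact h2
    · exact absurd h1 (Finset.disjoint_left.mp hdisj hu)
  -- membership in YY for neighbours of X ∪ Z
  have hYmem : ∀ x ∈ XX G κ ∪ ZZ G κ, ∀ y, G.Adj x y → y ∈ YY G κ := by
    intro x hx y hGxy
    have hnot : y ∉ XX G κ ∪ ZZ G κ := fun hmem => hind x hx y hmem hGxy
    have hynX : y ∉ XX G κ := fun h => hnot (Finset.mem_union_left _ h)
    have hynZ : y ∉ ZZ G κ := fun h => hnot (Finset.mem_union_right _ h)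
    have hy2 : y ∈ XX G κ ∪ YY G κ := by
      by_contra h2
      exact hynZ (Finset.mem_sdiff.mpr ⟨Finset.mem_univ y, h2⟩)
    exact (Finset.mem_union.mp hy2).resolve_left hynX
  -- key: a vertex of X ∪ Z lying in P has an H-neighbour in D ∩ Ypos
  have key : ∀ x ∈ XX G κ ∪ ZZ G κ, x ∈ P → ∃ y, y ∈ D ∩ Ypos G κ ∧ H.Adj x y := by
    intro x hx hxP
    have hpos := hP x hxP
    rw [deg] at hpos
    obtain ⟨y, hy⟩ := Finset.card_pos.mp hpos
    rw [Finset.mem_filter] at hy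
    have hxy : H.Adj x y := hy.2
    have hyD : y ∈ D := by
      rcases hbip hxy with ⟨h1, _⟩ | ⟨_, h2⟩
      · exact absurd hxP (Finset.disjoint_left.mp hdisj h1)
      · exact h2
    have hyY : y ∈ YY G κ := hYmem x hx y (hHG hxy)
    have hκy : 0 < κ y := by
      have h1 : 0 < deg H y := by
        rw [deg]
        exact Finset.card_pos.mpr ⟨x, Finset.mem_filter.mpr ⟨Finset.mem_univ x, hxy.symm⟩⟩
      rw [hDdeg y hyD] at h1
      exact h1
    exact ⟨y, Finset.mem_inter.mpr ⟨hyD, Finset.mem_filter.mpr ⟨hyY, hκy⟩⟩, hxy⟩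
  -- D ∩ Ypos is empty
  have hW : ¬ (D ∩ Ypos G κ).Nonempty := by
    intro hne
    set W := D ∩ Ypos G κ with hWdef
    have hOlt := hO W hne Finset.inter_subset_right
    have hLnD : ∀ x ∈ LL G κ W, x ∉ D := by
      intro x hxL hxD
      rw [LL, Finset.mem_filter] at hxL
      obtain ⟨hxXZ, hlt⟩ := hxL
      have hsub : Finset.univ.filter (H.Adj x) ⊆
          Finset.univ.filter (fun y => G.Adj x y ∧ y ∉ W) := by
        intro y hy
        rw [Finset.mem_filter] at hy ⊢
        refine ⟨hy.1, hHG hy.2, fun hyW => ?_⟩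
        have hyP := hbip' hy.2 hxD
        exact Finset.disjoint_left.mp hdisj (Finset.mem_inter.mp hyW).1 hyP
      have h1 : deg H x ≤ (Finset.univ.filter (fun y => G.Adj x y ∧ y ∉ W)).card :=
        Finset.card_le_card hsub
      have h2 : (nbrW G x W).card +
          (Finset.univ.filter (fun y => G.Adj x y ∧ y ∉ W)).card = deg G x := by
        have := Finset.card_filter_add_card_filter_not
          (s := Finset.univ.filter (G.Adj x)) (p := fun y => y ∈ W)
        rw [Finset.filter_filter, Finset.filter_filter] at this
        rw [nbrW, deg]
        exact this
      have h3 := hDdeg x hxD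
      omega
    have hLsub : LL G κ W ⊆ W.biUnion fun w => Finset.univ.filter (H.Adj w) := by
      intro x hxL
      have hxP : x ∈ P := (hmemDP x).resolve_left (hLnD x hxL)
      have hxXZ : x ∈ XX G κ ∪ ZZ G κ := (Finset.mem_filter.mp hxL).1
      obtain ⟨y, hyW, hxy⟩ := key x hxXZ hxP
      exact Finset.mem_biUnion.mpr
        ⟨y, hyW, Finset.mem_filter.mpr ⟨Finset.mem_univ x, hxy.symm⟩⟩
    have hcount : (LL G κ W).card ≤ ∑ w ∈ W, κ w := by
      calc (LL G κ W).card ≤ (W.biUnion fun w => Finset.univ.filter (H.Adj w)).card :=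
            Finset.card_le_card hLsub
        _ ≤ ∑ w ∈ W, (Finset.univ.filter (H.Adj w)).card := Finset.card_biUnion_le
        _ = ∑ w ∈ W, κ w :=
            Finset.sum_congr rfl fun w hw => hDdeg w (Finset.mem_inter.mp hw).1
    omega
  -- X ∪ Z ⊆ D
  have hXZ : XX G κ ∪ ZZ G κ ⊆ D := by
    intro x hx
    rcases hmemDP x with h | h
    · exact h
    · obtain ⟨y, hyW, _⟩ := key x hx h
      exact absurd ⟨y, hyW⟩ hW
  -- D ∩ Y = ∅
  have hDY : ∀ y ∈ D, y ∉ YY G κ := by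
    intro y hyD hyY
    by_cases hk : 0 < κ y
    · exact hW ⟨y, Finset.mem_inter.mpr ⟨hyD, Finset.mem_filter.mpr ⟨hyY, hk⟩⟩⟩
    · rw [YY, Finset.mem_filter] at hyY
      obtain ⟨-, -, x, hxX, hadj⟩ := hyY
      have hκx : 0 < κ x := (hedge x y hadj).resolve_right (by omega)
      have hxD : x ∈ D := hXZ (Finset.mem_union_left _ hxX)
      have hxd : κ x = deg G x := (Finset.mem_filter.mp hxX).2
      have hHeq : Finset.univ.filter (H.Adj x) = Finset.univ.filter (G.Adj x) := by
        apply Finset.eq_of_subset_of_card_le (hfsub x)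
        have h1 : deg H x = deg G x := by rw [hDdeg x hxD, hxd]
        exact le_of_eq h1.symm
      have hHxy : H.Adj x y := by
        have hymem : y ∈ Finset.univ.filter (G.Adj x) :=
          Finset.mem_filter.mpr ⟨Finset.mem_univ y, hadj⟩
        rw [← hHeq] at hymem
        exact (Finset.mem_filter.mp hymem).2
      exact Finset.disjoint_left.mp hdisj hyD (hbip' hHxy hxD)
  -- conclude
  apply Finset.Subset.antisymm _ hXZ
  intro v hvD
  by_contra h
  have hvnX : v ∉ XX G κ := fun hx => h (Finset.mem_union_left _ hx)
  have hvnZ : v ∉ ZZ G κ := fun hz => h (Finset.mem_union_right _ hz)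
  have hv2 : v ∈ XX G κ ∪ YY G κ := by
    by_contra h2
    exact hvnZ (Finset.mem_sdiff.mpr ⟨Finset.mem_univ v, h2⟩)
  rcases Finset.mem_union.mp hv2 with h3 | h3
  · exact hvnX h3
  · exact hDY v hvD h3
end
end
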